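/- For every w = ξ + iη ∈ ℂ^d with |η| < 1/4, writing √(1+w²) for the principal branch applied to 1 + w² (where w² = w₁²+···+w_d²), one has Re(√(1+w²)) ≥ √(1 + |ξ|² - |η|²). -/

import Mathlib

open Complex

theorem Complex.sqrt_re_le_re_cpow_half (z : ℂ) : √z.re ≤ (z ^ ((1 : ℂ) / 2)).re := by
  rw [one_div, cpow_inv_two_re]
  exact Real.sqrt_le_sqrt (by linarith [re_le_norm z])

theorem Complex.re_sum_sq {ι : Type*} (s : Finset ι) (w : ι → ℂ) :
    (∑ j ∈ s, w j ^ 2).re = ∑ j ∈ s, (w j).re ^ 2 - ∑ j ∈ s, (w j).im ^ 2 := by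
  simp only [re_sum, sq, mul_re, ← Finset.sum_sub_distrib]

theorem re_sqrt_one_add_sq_ge_general (d : ℕ) (w : Fin d → ℂ) :
    Real.sqrt (1 + (∑ j, (w j).re ^ 2) - ∑ j, (w j).im ^ 2) ≤
      ((1 + ∑ j, (w j) ^ 2) ^ ((1 : ℂ) / 2)).re := by
  have hre : (1 + ∑ j, w j ^ 2).re = 1 + (∑ j, (w j).re ^ 2) - ∑ j, (w j).im ^ 2 := by
    rw [add_re, one_re, re_sum_sq, add_sub_assoc]
  rw [← hre]
  exact sqrt_re_le_re_cpow_half _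

theorem re_sqrt_one_add_sq_ge (d : ℕ) (w : Fin d → ℂ)
    (h : Real.sqrt (∑ j, (w j).im ^ 2) < 1 / 4) :
    Real.sqrt (1 + (∑ j, (w j).re ^ 2) - ∑ j, (w j).im ^ 2) ≤
      ((1 + ∑ j, (w j) ^ 2) ^ ((1 : ℂ) / 2)).re :=
  re_sqrt_one_add_sq_ge_general d w
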